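/- arXiv:2112.14880 — 9 statements merged into one kernel-verified Lean document; each statement's English description precedes it below -/
import Mathlib

section
/- Let G be a finite group, let p and q be distinct primes, let H be a subgroup of G of index p, and let N be a subgroup of G contained in H such that N is normal in H, N has index q in H, and the normal core of N in G is trivial. Then the normal core K of H in G is an elementary abelian q-group: K is commutative, every element k of K satisfies k^q = 1, and the order of K divides q^p. -/
/-! For `k` in the core `K` of `H`, every conjugate `g⁻¹ k g` lies in `H` and so has a class in
`H ⧸ N`, cyclic of order `q`. One representative `g` per coset of `H` gives a homomorphism
`K → (H ⧸ N) ^ (G ⧸ H)`. Moving `g` inside its coset conjugates the class by an element of `H`,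
so the kernel consists of the `k` all of whose conjugates lie in `N`: it is the core of `N`,
which is trivial. Thus `K` embeds into a product of `p` copies of a group of order `q`. -/

namespace Subgroup

variable {G : Type*} [Group G] (H N : Subgroup G) [(N.subgroupOf H).Normal]

def normalCoreConjToQuotient (g : G) : H.normalCore →* H ⧸ N.subgroupOf H :=
  (QuotientGroup.mk' _).comp <|
    (inclusion H.normalCore_le).comp (MulAut.conjNormal g)⁻¹.toMonoidHom

theorem normalCoreConjToQuotient_eq_one_iff (g : G) (k : H.normalCore) :
    normalCoreConjToQuotient H N g k = 1 ↔ g⁻¹ * k * g ∈ N := by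
  simp [normalCoreConjToQuotient, mem_subgroupOf]

theorem normalCoreConjToQuotient_mul (g : G) (h : H) (k : H.normalCore) :
    normalCoreConjToQuotient H N (g * h) k =
      (h : H ⧸ N.subgroupOf H)⁻¹ * normalCoreConjToQuotient H N g k * h := by
  simp only [normalCoreConjToQuotient, MonoidHom.comp_apply, QuotientGroup.mk'_apply,
    ← QuotientGroup.mk_inv, ← QuotientGroup.mk_mul]
  congr 1
  ext
  simp only [MulEquiv.coe_toMonoidHom, coe_inclusion, MulAut.conjNormal_inv_apply, coe_mul,
    coe_inv, mul_inv_rev]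
  group

noncomputable def normalCoreToPi : H.normalCore →* (G ⧸ H → H ⧸ N.subgroupOf H) :=
  MonoidHom.pi fun x => normalCoreConjToQuotient H N x.out

theorem normalCoreToPi_eq_one_iff (k : H.normalCore) :
    normalCoreToPi H N k = 1 ↔ (k : G) ∈ N.normalCore := by
  refine ⟨fun hk b => ?_, fun hk => funext fun x => ?_⟩
  · obtain ⟨h, hout⟩ := QuotientGroup.mk_out_eq_mul H b⁻¹
    have hb := congrFun hk (b⁻¹ : G)
    rw [normalCoreToPi, MonoidHom.pi_apply, hout, normalCoreConjToQuotient_mul,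
      Pi.one_apply, mul_eq_one_iff_eq_inv] at hb
    simpa using (normalCoreConjToQuotient_eq_one_iff H N b⁻¹ k).1 (by simpa using hb)
  · simpa [normalCoreToPi, normalCoreConjToQuotient_eq_one_iff] using hk x.out⁻¹

theorem normalCoreToPi_injective (hN : N.normalCore = ⊥) :
    Function.Injective (normalCoreToPi H N) := by
  rw [injective_iff_map_eq_one]
  intro k hk
  simpa [hN] using (normalCoreToPi_eq_one_iff H N k).1 hk

end Subgroup

theorem stmt_0_general {G : Type*} [Group G] (p q : ℕ)
    (hp : p.Prime) (hq : q.Prime)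
    (H N : Subgroup G) (hHp : H.index = p)
    (hNnorm : (N.subgroupOf H).Normal)
    (hNq : N.relIndex H = q) (hNcore : N.normalCore = ⊥) :
    (∀ a b : G, a ∈ H.normalCore → b ∈ H.normalCore → a * b = b * a) ∧
    (∀ k : G, k ∈ H.normalCore → k ^ q = 1) ∧
    Nat.card H.normalCore ∣ q ^ p := by
  have hcardQ : Nat.card (H ⧸ N.subgroupOf H) = q := hNq
  have : Fact q.Prime := ⟨hq⟩
  have : IsCyclic (H ⧸ N.subgroupOf H) := isCyclic_of_prime_card hcardQ
  have hQcomm : ∀ x y : H ⧸ N.subgroupOf H, x * y = y * x := IsCyclic.commGroup.mul_comm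
  have : Subgroup.FiniteIndex H := ⟨hHp ▸ hp.ne_zero⟩
  have hinj := H.normalCoreToPi_injective N hNcore
  refine ⟨fun a b ha hb => ?_, fun k hk => ?_, ?_⟩
  · have hab : (⟨a, ha⟩ * ⟨b, hb⟩ : H.normalCore) = ⟨b, hb⟩ * ⟨a, ha⟩ :=
      hinj <| by simp only [map_mul]; exact funext fun x => hQcomm _ _
    simpa using congrArg Subtype.val hab
  · have hkq : (⟨k, hk⟩ ^ q : H.normalCore) = 1 :=
      hinj <| by
        rw [map_pow, map_one]
        funext x
        rw [Pi.pow_apply, ← hcardQ, pow_card_eq_one', Pi.one_apply]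
    simpa using congrArg Subtype.val hkq
  · simpa [Nat.card_fun, hcardQ, ← Subgroup.index_eq_card, hHp] using
      Subgroup.card_dvd_of_injective _ hinj

/-- Let `G` be a finite group, `p` and `q` distinct primes, `H` a subgroup of index `p`,
and `N ≤ H` normal in `H` of index `q` in `H` with trivial normal core in `G`.
Then the normal core `K` of `H` in `G` is an elementary abelian `q`-group:
`K` is commutative, every `k ∈ K` satisfies `k ^ q = 1`, and `|K|` divides `q ^ p`. -/
theorem stmt_0 {G : Type*} [Group G] [Finite G] (p q : ℕ)
    (hp : p.Prime) (hq : q.Prime) (hpq : p ≠ q)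
    (H N : Subgroup G) (hHp : H.index = p)
    (hNH : N ≤ H) (hNnorm : (N.subgroupOf H).Normal)
    (hNq : N.relIndex H = q) (hNcore : N.normalCore = ⊥) :
    (∀ a b : G, a ∈ H.normalCore → b ∈ H.normalCore → a * b = b * a) ∧
    (∀ k : G, k ∈ H.normalCore → k ^ q = 1) ∧
    Nat.card H.normalCore ∣ q ^ p :=
  stmt_0_general p q hp hq H N hHp hNnorm hNq hNcore
end

section
/- Let p be a prime and let G be a finite group such that p² does not divide the order of G, G has a subgroup H of index p, and G is generated by its elements of order p. Let K be the normal core of H in G. Then the quotient group G/K is a simple group. -/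
/-!
Let `K` be the normal core of `H`. A normal subgroup `M` of `G` containing `K` either lies in `H`,
and then in `K`, or satisfies `M ⊔ H = ⊤` because `H` has prime index. In the latter case
`G ⧸ M ≅ H ⧸ (H ⊓ M)`, so `|G : M|` divides `|H|`, which is prime to `p` since `p ^ 2 ∤ |G|`.
The image in `G ⧸ M` of an element of order `p` then has order dividing both `p` and `|G : M|`,
so every element of order `p` lies in `M`, and `M = ⊤`.
-/

namespace Subgroup

variable {G : Type*} [Group G]

theorem sup_eq_top_of_index_prime {H M : Subgroup G} (hH : H.index.Prime) (hMH : ¬ M ≤ H) :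
    M ⊔ H = ⊤ := by
  have hmul := relIndex_mul_index (le_sup_right : H ≤ M ⊔ H)
  rcases hH.eq_one_or_self_of_dvd _ (Dvd.intro_left _ hmul) with h | h
  · exact index_eq_one.mp h
  · rw [h, Nat.mul_eq_right hH.ne_zero, relIndex_eq_one] at hmul
    exact absurd (le_sup_left.trans hmul) hMH

theorem index_dvd_card_of_sup_eq_top {H M : Subgroup G} [M.Normal] (hMH : M ⊔ H = ⊤) :
    M.index ∣ Nat.card H := by
  rw [← relIndex_top_right, ← hMH, relIndex_sup_left]
  exact relIndex_dvd_card M H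

theorem mem_of_coprime_orderOf_index {M : Subgroup G} [M.Normal] {g : G}
    (hg : (orderOf g).Coprime M.index) : g ∈ M := by
  have hdvd : orderOf (g : G ⧸ M) ∣ orderOf g := orderOf_map_dvd (QuotientGroup.mk' M) g
  have hone : orderOf (g : G ⧸ M) = 1 := Nat.eq_one_of_dvd_coprimes hg hdvd (_root_.orderOf_dvd_natCard _)
  exact (QuotientGroup.eq_one_iff g).mp (orderOf_eq_one_iff.mp hone)

theorem eq_top_of_not_le_of_index_prime {p : ℕ} (hp : p.Prime) {H M : Subgroup G} [M.Normal]
    (hHp : H.index = p) (hpH : ¬ p ∣ Nat.card H)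
    (hgen : closure {g : G | orderOf g = p} = ⊤) (hMH : ¬ M ≤ H) : M = ⊤ := by
  have hpM : ¬ p ∣ M.index := fun h =>
    hpH (h.trans (index_dvd_card_of_sup_eq_top (sup_eq_top_of_index_prime (hHp ▸ hp) hMH)))
  rw [eq_top_iff, ← hgen, closure_le]
  intro g hg
  exact mem_of_coprime_orderOf_index (hg ▸ (hp.coprime_iff_not_dvd.mpr hpM))

end Subgroup

theorem QuotientGroup.isSimpleGroup_of_forall_normal {G : Type*} [Group G] {N : Subgroup G}
    [N.Normal] (hN : N ≠ ⊤) (h : ∀ M : Subgroup G, M.Normal → N ≤ M → M ≤ N ∨ M = ⊤) :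
    IsSimpleGroup (G ⧸ N) := by
  have := QuotientGroup.nontrivial_iff.mpr hN
  refine ⟨fun L hL => ?_⟩
  have hsurj := QuotientGroup.mk'_surjective N
  have hNL : N ≤ L.comap (QuotientGroup.mk' N) := by
    simpa only [QuotientGroup.ker_mk'] using MonoidHom.ker_le_comap (QuotientGroup.mk' N) L
  rw [← Subgroup.map_comap_eq_self_of_surjective hsurj L]
  rcases h _ (hL.comap _) hNL with hle | htop
  · left
    exact le_bot_iff.mp ((Subgroup.map_mono hle).trans (QuotientGroup.map_mk'_self N).le)
  · right
    rw [htop, Subgroup.map_top_of_surjective _ hsurj]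

theorem stmt_3_general {G : Type*} [Group G] (p : ℕ) (hp : p.Prime)
    (hp2 : ¬ (p ^ 2 ∣ Nat.card G))
    (H : Subgroup G) (hHp : H.index = p)
    (hgen : Subgroup.closure {g : G | orderOf g = p} = ⊤) :
    IsSimpleGroup (G ⧸ H.normalCore) := by
  have hpH : ¬ p ∣ Nat.card H := fun h => hp2 <| by
    rw [← H.card_mul_index, hHp, pow_two]
    exact Nat.mul_dvd_mul_right h p
  have hH : H ≠ ⊤ := fun h => hp.one_lt.ne' (hHp ▸ Subgroup.index_eq_one.mpr h)
  refine QuotientGroup.isSimpleGroup_of_forall_normal (ne_top_of_le_ne_top hH H.normalCore_le)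
    fun M _ _ => ?_
  by_cases hMH : M ≤ H
  · exact Or.inl (Subgroup.normal_le_normalCore.mpr hMH)
  · exact Or.inr (Subgroup.eq_top_of_not_le_of_index_prime hp hHp hpH hgen hMH)

/-- Let `p` be a prime and `G` a finite group such that `p ^ 2` does not divide `|G|`,
`G` has a subgroup `H` of index `p`, and `G` is generated by its elements of order `p`.
Then `G ⧸ (normal core of H)` is a simple group. -/
theorem stmt_3 {G : Type*} [Group G] [Finite G] (p : ℕ) (hp : p.Prime)
    (hp2 : ¬ (p ^ 2 ∣ Nat.card G))
    (H : Subgroup G) (hHp : H.index = p)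
    (hgen : Subgroup.closure {g : G | orderOf g = p} = ⊤) :
    IsSimpleGroup (G ⧸ H.normalCore) :=
  stmt_3_general p hp hp2 H hHp hgen
end

section
/- Let G be a finite group, let p and q be distinct primes, let H be a subgroup of G of index p, and let N be a subgroup of G contained in H such that N is normal in H, N has index q in H, and the normal core of N in G is trivial. Assume moreover that p² does not divide the order of G. Then there exist elements σ, τ of G such that: σ has order p, τ ∈ H, τ ∉ N, τ^q ∈ N, and every element g of G can be written in the form g = n · τ^a · σ^b with n ∈ N, 0 ≤ a ≤ q−1 and 0 ≤ b ≤ p−1. -/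
/-!
Since `p ^ 2 ∤ |G|`, the index `p` of `H` is coprime to `|H|`, so any `σ` of order `p` generates a
complement of `H`: every `g` is `h * σ ^ b` with `h ∈ H`. As `H / N` has prime order `q`, any
`τ ∈ H \ N` generates it, so every `h ∈ H` is `n * τ ^ a` with `n ∈ N`.
-/

open Subgroup

theorem Subgroup.exists_forall_eq_mul_pow_of_index_eq_prime {K : Type*} [Group K]
    {M : Subgroup K} [M.Normal] {q : ℕ} (hq : q.Prime) (hM : M.index = q) :
    ∃ τ ∉ M, τ ^ q ∈ M ∧ ∀ k : K, ∃ n ∈ M, ∃ a < q, k = n * τ ^ a := by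
  classical
  have : Fact q.Prime := ⟨hq⟩
  have hcard : Nat.card (K ⧸ M) = q := hM
  have : Finite (K ⧸ M) := Nat.finite_of_card_ne_zero (hcard ▸ hq.ne_zero)
  obtain ⟨τ, hτ⟩ : ∃ τ, τ ∉ M := by
    by_contra! h
    exact hq.one_lt.ne' (hM ▸ (M.eq_top_iff' |>.mpr h ▸ index_top))
  have ht : (τ : K ⧸ M) ≠ 1 := by rwa [Ne, QuotientGroup.eq_one_iff]
  have hτq : (τ : K ⧸ M) ^ q = 1 := hcard ▸ pow_card_eq_one'
  have horder : orderOf (τ : K ⧸ M) = q := orderOf_eq_prime hτq ht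
  refine ⟨τ, hτ, (QuotientGroup.eq_one_iff _).mp hτq, fun k => ?_⟩
  have hk : (k : K ⧸ M) ∈ zpowers (τ : K ⧸ M) := by
    rw [zpowers_eq_top_of_prime_card hcard ht]; exact mem_top _
  obtain ⟨a, ha, hak⟩ := Finset.mem_image.mp (mem_zpowers_iff_mem_range_orderOf.mp hk)
  refine ⟨k * (τ ^ a)⁻¹, ?_, a, horder ▸ Finset.mem_range.mp ha, by group⟩
  rw [← QuotientGroup.eq_one_iff, QuotientGroup.mk_mul, QuotientGroup.mk_inv,
    QuotientGroup.mk_pow, hak, mul_inv_cancel]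

theorem Subgroup.isComplement'_zpowers_of_index_eq_prime {G : Type*} [Group G] [Finite G]
    {H : Subgroup G} {p : ℕ} (hp : p.Prime) (hH : H.index = p) (hp2 : ¬ p ^ 2 ∣ Nat.card G)
    {σ : G} (hσ : orderOf σ = p) : H.IsComplement' (zpowers σ) := by
  have hcard : Nat.card H * p = Nat.card G := hH ▸ H.card_mul_index
  have hpH : ¬ p ∣ Nat.card H := fun hd =>
    hp2 (hcard ▸ pow_two p ▸ mul_dvd_mul hd dvd_rfl)
  exact isComplement'_of_coprime (by rwa [Nat.card_zpowers, hσ])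
    (by rw [Nat.card_zpowers, hσ]; exact (hp.coprime_iff_not_dvd.mpr hpH).symm)

theorem Subgroup.IsComplement'.exists_eq_mul_pow {G : Type*} [Group G] [Finite G]
    {H : Subgroup G} {σ : G} (hc : H.IsComplement' (zpowers σ)) (g : G) :
    ∃ h ∈ H, ∃ b < orderOf σ, g = h * σ ^ b := by
  classical
  obtain ⟨⟨h, k⟩, hhk⟩ := (hc.existsUnique g).exists
  obtain ⟨b, hb, hbk⟩ := Finset.mem_image.mp (mem_zpowers_iff_mem_range_orderOf.mp k.2)
  exact ⟨h, h.2, b, Finset.mem_range.mp hb, by rw [← hhk, hbk]⟩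

theorem stmt_5_general {G : Type*} [Group G] [Finite G] (p q : ℕ)
    (hp : p.Prime) (hq : q.Prime)
    (H N : Subgroup G) (hHp : H.index = p)
    (hNnorm : (N.subgroupOf H).Normal)
    (hNq : N.relIndex H = q)
    (hp2 : ¬ (p ^ 2 ∣ Nat.card G)) :
    ∃ σ τ : G, orderOf σ = p ∧ τ ∈ H ∧ τ ∉ N ∧ τ ^ q ∈ N ∧
      ∀ g : G, ∃ n ∈ N, ∃ a b : ℕ, a ≤ q - 1 ∧ b ≤ p - 1 ∧ g = n * τ ^ a * σ ^ b := by
  have : Fact p.Prime := ⟨hp⟩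
  obtain ⟨σ, hσ⟩ := exists_prime_orderOf_dvd_card' p (hHp ▸ H.index_dvd_card)
  have hc := isComplement'_zpowers_of_index_eq_prime hp hHp hp2 hσ
  obtain ⟨τ, hτN, hτq, hτ⟩ :=
    exists_forall_eq_mul_pow_of_index_eq_prime (M := N.subgroupOf H) hq hNq
  refine ⟨σ, τ, hσ, τ.2, mem_subgroupOf.not.mp hτN, mem_subgroupOf.mp hτq, fun g => ?_⟩
  obtain ⟨h, hH, b, hb, rfl⟩ := hc.exists_eq_mul_pow g
  obtain ⟨n, hn, a, ha, hna⟩ := hτ ⟨h, hH⟩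
  refine ⟨n, mem_subgroupOf.mp hn, a, b, by omega, by omega, ?_⟩
  simpa using congrArg (fun x : H => (x : G) * σ ^ b) hna

/-- With the standing hypotheses on `G`, `H`, `N` and assuming `p ^ 2 ∤ |G|`,
there exist `σ, τ ∈ G` with `orderOf σ = p`, `τ ∈ H`, `τ ∉ N`, `τ ^ q ∈ N`, and
every `g ∈ G` can be written `g = n * τ ^ a * σ ^ b` with `n ∈ N`,
`0 ≤ a ≤ q - 1` and `0 ≤ b ≤ p - 1`. -/
theorem stmt_5 {G : Type*} [Group G] [Finite G] (p q : ℕ)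
    (hp : p.Prime) (hq : q.Prime) (hpq : p ≠ q)
    (H N : Subgroup G) (hHp : H.index = p)
    (hNH : N ≤ H) (hNnorm : (N.subgroupOf H).Normal)
    (hNq : N.relIndex H = q) (hNcore : N.normalCore = ⊥)
    (hp2 : ¬ (p ^ 2 ∣ Nat.card G)) :
    ∃ σ τ : G, orderOf σ = p ∧ τ ∈ H ∧ τ ∉ N ∧ τ ^ q ∈ N ∧
      ∀ g : G, ∃ n ∈ N, ∃ a b : ℕ, a ≤ q - 1 ∧ b ≤ p - 1 ∧ g = n * τ ^ a * σ ^ b :=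
  stmt_5_general p q hp hq H N hHp hNnorm hNq hp2
end

section
/- Let G be a finite group, let p and q be distinct primes, let H be a subgroup of G of index p, and let N be a subgroup of G contained in H such that N is normal in H, N has index q in H, and the normal core of N in G is trivial. Assume moreover that p² does not divide the order of G. Consider the action of G on the coset space G/N by left multiplication, and let π : G/N → G/H be the natural projection of coset spaces. Then there exists a permutation ε of G/N such that: ε has order q; ε commutes with the permutation of G/N induced by every element of G; π(ε(x)) = π(x) for every x ∈ G/N; and for any x, y ∈ G/N with π(x) = π(y) there exists an integer k with ε^k(x) = y. (Thus the orbits of ε are exactly the p fibers of π, each of size q.) -/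
/-!
Since `N` is normal in `H`, right multiplication `gN ↦ gaN` by any `a ∈ H` is well defined on
`G ⧸ N`, commutes with left multiplication by `G`, and preserves the cosets of `H`. The quotient
`H ⧸ N` has prime order `q`, so it is generated by `aN` for any `a ∈ H \ N`; the powers of right
multiplication by such an `a` therefore act transitively on each fibre `gH ⧸ N`, and the
permutation has order exactly `q`.
-/

open MulOpposite Subgroup

namespace QuotientGroup

variable {G : Type*} [Group G] {N : Subgroup G} {a : G}

def rightMulPerm (a : G) (ha : a ∈ normalizer (N : Set G)) : Equiv.Perm (G ⧸ N) :=
  MulAction.toPerm (⟨op a, ha⟩ : (normalizer (N : Set G)).op)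

@[simp]
theorem rightMulPerm_mk (ha : a ∈ normalizer (N : Set G)) (g : G) :
    rightMulPerm a ha g = ↑(g * a) :=
  rfl

theorem rightMulPerm_zpow_mk (ha : a ∈ normalizer (N : Set G)) (k : ℤ) (g : G) :
    (rightMulPerm a ha ^ k) g = ↑(g * a ^ k) := by
  rw [rightMulPerm, ← MulAction.toPermHom_apply, ← map_zpow]
  rfl

theorem rightMulPerm_pow_eq_one_iff (ha : a ∈ normalizer (N : Set G)) (n : ℕ) :
    rightMulPerm a ha ^ n = 1 ↔ a ^ n ∈ N := by
  have key (g : G) : (rightMulPerm a ha ^ n) g = g ↔ a ^ n ∈ N := by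
    rw [← zpow_natCast, rightMulPerm_zpow_mk, QuotientGroup.eq]
    simp
  refine ⟨fun h => (key 1).mp (by rw [h]; rfl), fun h => ?_⟩
  ext x
  induction x using QuotientGroup.induction_on with
  | H g => exact (key g).mpr h

theorem rightMulPerm_smul (ha : a ∈ normalizer (N : Set G)) (g : G) (x : G ⧸ N) :
    rightMulPerm a ha (g • x) = g • rightMulPerm a ha x := by
  induction x using QuotientGroup.induction_on with
  | H h => simp [mul_assoc]

theorem quotientMapOfLE_rightMulPerm {H : Subgroup G} (hNH : N ≤ H)
    (ha : a ∈ normalizer (N : Set G)) (haH : a ∈ H) (x : G ⧸ N) :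
    quotientMapOfLE hNH (rightMulPerm a ha x) = quotientMapOfLE hNH x := by
  induction x using QuotientGroup.induction_on with
  | H g => simp [haH]

theorem exists_zpow_rightMulPerm_eq {H : Subgroup G} (hNH : N ≤ H)
    (ha : a ∈ normalizer (N : Set G)) (hgen : ∀ h ∈ H, ∃ k : ℤ, (h : G ⧸ N) = ↑(a ^ k))
    {x y : G ⧸ N} (hxy : quotientMapOfLE hNH x = quotientMapOfLE hNH y) :
    ∃ k : ℤ, (rightMulPerm a ha ^ k) x = y := by
  induction x using QuotientGroup.induction_on with
  | H g =>
  induction y using QuotientGroup.induction_on with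
  | H g' =>
  rw [quotientMapOfLE_apply_mk, quotientMapOfLE_apply_mk, QuotientGroup.eq] at hxy
  obtain ⟨k, hk⟩ := hgen _ hxy
  refine ⟨k, ?_⟩
  rw [rightMulPerm_zpow_mk, ← smul_eq_mul, ← MulAction.Quotient.smul_mk, ← hk,
    MulAction.Quotient.smul_mk, smul_eq_mul, mul_inv_cancel_left]

theorem exists_generator_of_relIndex_prime {H : Subgroup G} [(N.subgroupOf H).Normal] {q : ℕ}
    (hq : q.Prime) (hNq : N.relIndex H = q) :
    ∃ a ∈ H, a ∉ N ∧ a ^ q ∈ N ∧ ∀ h ∈ H, ∃ k : ℤ, (h : G ⧸ N) = ↑(a ^ k) := by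
  have : Fact q.Prime := ⟨hq⟩
  have hQ : Nat.card (H ⧸ N.subgroupOf H) = q := hNq
  have : Finite (H ⧸ N.subgroupOf H) := Nat.finite_of_card_ne_zero (hQ ▸ hq.ne_zero)
  have : Nontrivial (H ⧸ N.subgroupOf H) :=
    Finite.one_lt_card_iff_nontrivial.mp (hQ ▸ hq.one_lt)
  obtain ⟨⟨a, haH⟩, ha⟩ :=
    QuotientGroup.mk_surjective.exists.mp (exists_ne (1 : H ⧸ N.subgroupOf H))
  refine ⟨a, haH, ?_, ?_, fun h hh => ?_⟩
  · simpa [QuotientGroup.eq_one_iff, mem_subgroupOf] using ha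
  · have := pow_card_eq_one' (x := ((⟨a, haH⟩ : H) : H ⧸ N.subgroupOf H))
    rw [hQ, ← QuotientGroup.mk_pow, QuotientGroup.eq_one_iff, mem_subgroupOf] at this
    simpa using this
  · obtain ⟨k, hk⟩ := mem_zpowers_iff.mp <|
      mem_zpowers_of_prime_card hQ ha (g' := ((⟨h, hh⟩ : H) : H ⧸ N.subgroupOf H))
    rw [← QuotientGroup.mk_zpow, QuotientGroup.eq, mem_subgroupOf] at hk
    refine ⟨k, (QuotientGroup.eq.mpr ?_).symm⟩
    simpa using hk

end QuotientGroup

open QuotientGroup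

theorem stmt_7_general {G : Type*} [Group G] (q : ℕ)
    (hq : q.Prime)
    (H N : Subgroup G)
    (hNH : N ≤ H) (hNnorm : (N.subgroupOf H).Normal)
    (hNq : N.relIndex H = q) :
    ∃ ε : Equiv.Perm (G ⧸ N),
      orderOf ε = q ∧
      (∀ (g : G) (x : G ⧸ N), ε (g • x) = g • ε x) ∧
      (∀ x : G ⧸ N, Subgroup.quotientMapOfLE hNH (ε x) = Subgroup.quotientMapOfLE hNH x) ∧
      (∀ x y : G ⧸ N, Subgroup.quotientMapOfLE hNH x = Subgroup.quotientMapOfLE hNH y →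
        ∃ k : ℤ, (ε ^ k) x = y) := by
  have := hNnorm
  have : Fact q.Prime := ⟨hq⟩
  obtain ⟨a, haH, haN, haq, hgen⟩ := exists_generator_of_relIndex_prime hq hNq
  have ha : a ∈ normalizer (N : Set G) := le_normalizer_of_normal_subgroupOf hNH haH
  have hε : rightMulPerm a ha ≠ 1 := by
    simpa using (rightMulPerm_pow_eq_one_iff ha 1).not.mpr (by simpa using haN)
  exact ⟨rightMulPerm a ha, orderOf_eq_prime ((rightMulPerm_pow_eq_one_iff ha q).mpr haq) hε,
    rightMulPerm_smul ha, quotientMapOfLE_rightMulPerm hNH ha haH,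
    fun _ _ => exists_zpow_rightMulPerm_eq hNH ha hgen⟩

/-- With the standing hypotheses on `G`, `H`, `N` and assuming `p ^ 2 ∤ |G|`,
consider the left-multiplication action of `G` on the coset space `G ⧸ N` and let
`π : G ⧸ N → G ⧸ H` be the natural projection. Then there is a permutation `ε` of
`G ⧸ N` of order `q` commuting with the permutation induced by every `g ∈ G`,
preserving the fibers of `π`, and acting transitively on each fiber of `π`. -/
theorem stmt_7 {G : Type*} [Group G] [Finite G] (p q : ℕ)
    (hp : p.Prime) (hq : q.Prime) (hpq : p ≠ q)
    (H N : Subgroup G) (hHp : H.index = p)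
    (hNH : N ≤ H) (hNnorm : (N.subgroupOf H).Normal)
    (hNq : N.relIndex H = q) (hNcore : N.normalCore = ⊥)
    (hp2 : ¬ (p ^ 2 ∣ Nat.card G)) :
    ∃ ε : Equiv.Perm (G ⧸ N),
      orderOf ε = q ∧
      (∀ (g : G) (x : G ⧸ N), ε (g • x) = g • ε x) ∧
      (∀ x : G ⧸ N, Subgroup.quotientMapOfLE hNH (ε x) = Subgroup.quotientMapOfLE hNH x) ∧
      (∀ x y : G ⧸ N, Subgroup.quotientMapOfLE hNH x = Subgroup.quotientMapOfLE hNH y →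
        ∃ k : ℤ, (ε ^ k) x = y) :=
  stmt_7_general q hq H N hNH hNnorm hNq
end

section
/- Let G be a finite group, let p and q be distinct primes with p odd, let H be a subgroup of G of index p, and let N be a subgroup of G contained in H such that N is normal in H, N has index q in H, and the normal core of N in G is trivial. Assume moreover that G is generated by its elements of order p. Then the order of the normal core K of H in G divides q^(p−1). -/
/-!
Let `K` be the normal core of `H` and `ϕ : H → H/N ≅ ℤ/q`. Since `K` acts trivially on the `p`
cosets of `H`, the transfer of `k ∈ K` into `H/N` is the product of the `p` values
`ϕ(x⁻¹ k x)` over coset representatives `x`. The map `k ↦ (ϕ(x⁻¹ k x))ₓ` is injective because its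
kernel lies in the core of `N`, and the transfer vanishes because `G` is generated by `p`-elements
while `H/N` has order `q`. So `K` embeds into the tuples in `(ℤ/q)ᵖ` with product `1`, a group of
order `q ^ (p - 1)`.
-/

open Subgroup MulAction

namespace Subgroup

variable {G : Type*} [Group G] {H : Subgroup G}

theorem inv_mul_mul_mem_of_mem_normalCore {k : G} (hk : k ∈ H.normalCore) (g : G) :
    g⁻¹ * k * g ∈ H := by
  simpa using H.normalCore_le (H.normalCore_normal.conj_mem k hk g⁻¹)

theorem smul_eq_of_mem_normalCore {k : G} (hk : k ∈ H.normalCore) (q : G ⧸ H) : k • q = q := by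
  rw [normalCore_eq_ker, MonoidHom.mem_ker] at hk
  exact congrArg (fun σ : Equiv.Perm (G ⧸ H) => σ q) hk

theorem mem_normalCore_of_forall_out_conj_mem {N : Subgroup G}
    (hHN : H ≤ normalizer (N : Set G)) {k : G} (hk : ∀ q : G ⧸ H, q.out⁻¹ * k * q.out ∈ N) : k ∈ N.normalCore := by
  intro b
  set q : G ⧸ H := ((b⁻¹ : G) : G ⧸ H)
  have hh : q.out⁻¹ * b⁻¹ ∈ H := QuotientGroup.leftRel_apply.mp (Quotient.exact' q.out_eq')
  have hconj := (mem_normalizer_iff.mp (hHN (inv_mem hh)) _).mp (hk q)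
  simpa [mul_assoc] using hconj

end Subgroup

theorem MonoidHom.eq_one_of_closure_orderOf_eq_top {G M : Type*} [Group G] [Group M] [Finite M]
    {p : ℕ} (hp : p.Coprime (Nat.card M)) (hgen : closure {g : G | orderOf g = p} = ⊤)
    (f : G →* M) : f = 1 := by
  suffices closure {g : G | orderOf g = p} ≤ f.ker by
    ext g; exact this (hgen ▸ mem_top g)
  refine closure_le _ |>.mpr fun g hg => ?_
  rw [SetLike.mem_coe, MonoidHom.mem_ker, ← orderOf_eq_one_iff]
  exact Nat.eq_one_of_dvd_coprimes hp (hg ▸ orderOf_map_dvd f g) (orderOf_dvd_natCard _)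

namespace MonoidHom

variable {G : Type*} [Group G] {H : Subgroup G}

noncomputable def normalCoreConj {M : Type*} [Group M] (ϕ : H →* M) :
    H.normalCore →* (G ⧸ H → M) where
  toFun k q := ϕ ⟨q.out⁻¹ * k * q.out, inv_mul_mul_mem_of_mem_normalCore k.2 q.out⟩
  map_one' := by
    funext q
    simp only [OneMemClass.coe_one, mul_one, inv_mul_cancel, Pi.one_apply]
    exact ϕ.map_one
  map_mul' a b := by
    funext q
    rw [Pi.mul_apply, ← map_mul]
    congr 1
    ext
    simp [mul_assoc]

theorem transfer_normalCore_eq_prod {A : Type*} [CommGroup A] (ϕ : H →* A) [H.FiniteIndex]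
    [Fintype (G ⧸ H)] (k : H.normalCore) : ϕ.transfer k = ∏ q, ϕ.normalCoreConj k q := by
  let T : H.LeftTransversal := ⟨_, isComplement_range_left (f := Quotient.out) Quotient.out_eq'⟩
  rw [transfer_def ϕ T, leftTransversals.diff]
  refine Finset.prod_congr (by congr; exact Subsingleton.elim _ _) fun q _ => congrArg ϕ ?_
  ext
  simp only [smul_apply_eq_smul_apply_inv_smul, smul_eq_mul,
    inv_smul_eq_iff.mpr (smul_eq_of_mem_normalCore k.2 q).symm]
  rw [IsComplement.leftQuotientEquiv_apply Quotient.out_eq', mul_assoc]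

theorem normalCoreConj_mk'_injective {N : Subgroup G} (hNH : N ≤ H) [(N.subgroupOf H).Normal]
    (hN : N.normalCore = ⊥) :
    Function.Injective (QuotientGroup.mk' (N.subgroupOf H)).normalCoreConj := by
  refine (injective_iff_map_eq_one _).mpr fun k hk => ?_
  have hconj : ∀ q : G ⧸ H, q.out⁻¹ * k * q.out ∈ N := fun q =>
    mem_subgroupOf.mp ((QuotientGroup.eq_one_iff _).mp (congrFun hk q))
  have hk : (k : G) ∈ N.normalCore :=
    mem_normalCore_of_forall_out_conj_mem (le_normalizer_of_normal_subgroupOf hNH) hconj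
  rw [hN, mem_bot] at hk
  exact Subtype.ext hk

end MonoidHom

theorem card_dvd_pow_of_injective_of_prod_eq_one {K ι A : Type*} [Group K] [Fintype ι]
    [Nonempty ι] [CommGroup A] (ψ : K →* (ι → A)) (hψ : Function.Injective ψ)
    (hprod : ∀ k, ∏ i, ψ k i = 1) : Nat.card K ∣ Nat.card A ^ (Nat.card ι - 1) := by
  classical
  obtain ⟨i₀⟩ := ‹Nonempty ι›
  let restrict : (ι → A) →* ({i // i ≠ i₀} → A) :=
    MonoidHom.pi fun i => Pi.evalMonoidHom (fun _ => A) i.1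
  have hinj : Function.Injective (restrict.comp ψ) := by
    refine (injective_iff_map_eq_one _).mpr fun k hk => hψ.eq_iff' (map_one ψ) |>.mp ?_
    have hoff : ∀ i ≠ i₀, ψ k i = 1 := fun i hi => congrFun hk ⟨i, hi⟩
    have hon : ψ k i₀ = 1 := by rw [← hprod k, Fintype.prod_eq_single i₀ hoff]
    funext i
    by_cases hi : i = i₀
    · exact hi ▸ hon
    · exact hoff i hi
  have := Subgroup.card_dvd_of_injective _ hinj
  rwa [Nat.card_fun, Nat.card_eq_fintype_card (α := {i // i ≠ i₀}), Fintype.card_subtype_compl,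
    Fintype.card_subtype_eq, ← Nat.card_eq_fintype_card] at this

theorem stmt_9_general {G : Type*} [Group G] [Finite G] (p q : ℕ)
    (hp : p.Prime) (hq : q.Prime) (hpq : p ≠ q)
    (H N : Subgroup G) (hHp : H.index = p)
    (hNH : N ≤ H) (hNnorm : (N.subgroupOf H).Normal)
    (hNq : N.relIndex H = q) (hNcore : N.normalCore = ⊥)
    (hgen : Subgroup.closure {g : G | orderOf g = p} = ⊤) :
    Nat.card H.normalCore ∣ q ^ (p - 1) := by
  have : H.FiniteIndex := ⟨hHp ▸ hp.ne_zero⟩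
  have : Fintype (G ⧸ H) := Fintype.ofFinite _
  have : Fact q.Prime := ⟨hq⟩
  have hA : Nat.card (H ⧸ N.subgroupOf H) = q := by rw [← index_eq_card, ← relIndex, hNq]
  let : CommGroup (H ⧸ N.subgroupOf H) := (isCyclic_of_prime_card hA).commGroup
  let ϕ : H →* H ⧸ N.subgroupOf H := QuotientGroup.mk' _
  have htransfer : ϕ.transfer = 1 :=
    MonoidHom.eq_one_of_closure_orderOf_eq_top (by rwa [hA, Nat.coprime_primes hp hq]) hgen _
  have hcard := card_dvd_pow_of_injective_of_prod_eq_one ϕ.normalCoreConj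
    (MonoidHom.normalCoreConj_mk'_injective hNH hNcore) fun k => by
      rw [← MonoidHom.transfer_normalCore_eq_prod, htransfer, MonoidHom.one_apply]
  rwa [hA, ← index_eq_card, hHp] at hcard

/-- With the standing hypotheses on `G`, `H`, `N`, with `p` odd, and `G` generated by
its elements of order `p`, the order of the normal core `K` of `H` in `G`
divides `q ^ (p - 1)`. -/
theorem stmt_9 {G : Type*} [Group G] [Finite G] (p q : ℕ)
    (hp : p.Prime) (hq : q.Prime) (hpq : p ≠ q) (hodd : Odd p)
    (H N : Subgroup G) (hHp : H.index = p)
    (hNH : N ≤ H) (hNnorm : (N.subgroupOf H).Normal)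
    (hNq : N.relIndex H = q) (hNcore : N.normalCore = ⊥)
    (hgen : Subgroup.closure {g : G | orderOf g = p} = ⊤) :
    Nat.card H.normalCore ∣ q ^ (p - 1) :=
  stmt_9_general p q hp hq hpq H N hHp hNH hNnorm hNq hNcore hgen
end

section
/- Let G be a finite group, let p and q be distinct primes with p odd, let H be a subgroup of G of index p, and let N be a subgroup of G contained in H such that N is normal in H, N has index q in H, and the normal core of N in G is trivial. Assume moreover that G is generated by its elements of order p. Then G is solvable if and only if H is a normal subgroup of G. Moreover, if H is normal in G, then H equals the normal core of H in G, H is commutative with h^q = 1 for every h ∈ H, and for every Sylow p-subgroup P of G one has |P| = p, H ∩ P = {1} and H·P = G (so G is an internal semidirect product H ⋊ P). -/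
/-!
If `G` is solvable, pass to `G ⧸ H.normalCore`, whose order divides `p!`, so that the image of
`H` has index `p` and order prime to `p`. This quotient is solvable and nontrivial, so its
commutator subgroup is proper; its abelianization is generated by elements `x` with `x ^ p = 1`,
so it has exponent `p`, and the image of `H`, a `p'`-group, lies in the commutator subgroup.
Having prime index, it equals it, hence is normal, and so is `H`.

Conversely, if `H` is normal, every conjugate of `N` is normal of index `q` in `H`, so all
commutators and `q`-th powers of elements of `H` lie in the core of `N`, which is trivial. Thus
`H` is an abelian group of exponent `q` with cyclic quotient, `G` is metabelian, and, `|H|` being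
prime to `p`, every Sylow `p`-subgroup has order `p` and is a complement of `H`.
-/

open Subgroup

section

variable {G : Type*} [Group G]

theorem pow_mem_commutator_of_closure_eq_top {p : ℕ}
    (hgen : closure {g : G | g ^ p = 1} = ⊤) (g : G) : g ^ p ∈ commutator G := by
  let K : Subgroup G := (powMonoidHom p : Abelianization G →* _).ker.comap Abelianization.of
  have hK : closure {g : G | g ^ p = 1} ≤ K :=
    (closure_le K).mpr fun x (hx : x ^ p = 1) => by simp [K, ← map_pow, hx]
  have hg : g ∈ K := hK (hgen ▸ mem_top g)
  rwa [← Abelianization.ker_of, MonoidHom.mem_ker, map_pow]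

theorem le_commutator_of_coprime {p : ℕ} (hgen : closure {g : G | g ^ p = 1} = ⊤)
    {H : Subgroup G} (hH : (Nat.card H).Coprime p) : H ≤ commutator G := by
  intro h hh
  have hp : Abelianization.of h ^ p = 1 := by
    rw [← map_pow, ← MonoidHom.mem_ker, Abelianization.ker_of]
    exact pow_mem_commutator_of_closure_eq_top hgen h
  have hcard : Abelianization.of h ^ Nat.card H = 1 := by
    rw [← map_pow, show h ^ Nat.card H = 1 from
      congrArg Subtype.val (pow_card_eq_one' (x := (⟨h, hh⟩ : H))), map_one]
  rw [← Abelianization.ker_of, MonoidHom.mem_ker]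
  simpa [hH.gcd_eq_one] using pow_gcd_eq_one.mpr ⟨hcard, hp⟩

theorem Subgroup.eq_of_le_of_index_prime {H K : Subgroup G} (hHK : H ≤ K) (hK : K ≠ ⊤)
    (hH : H.index.Prime) : H = K := by
  have hKH := relIndex_mul_index hHK
  rcases hH.eq_one_or_self_of_dvd _ (index_dvd_of_le hHK) with h1 | hK'
  · exact absurd (index_eq_one.mp h1) hK
  · refine le_antisymm hHK (relIndex_eq_one.mp ?_)
    rw [hK'] at hKH
    exact (Nat.mul_eq_right hH.ne_zero).mp hKH

theorem Subgroup.normal_of_index_prime_of_coprime [Group.IsSolvable G] {p : ℕ} (hp : p.Prime)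
    (hgen : closure {g : G | g ^ p = 1} = ⊤) {H : Subgroup G} (hHp : H.index = p)
    (hH : (Nat.card H).Coprime p) : H.Normal := by
  have : Nontrivial G := by
    by_contra h
    rw [not_nontrivial_iff_subsingleton] at h
    exact hp.ne_one (hHp ▸ index_eq_one.mpr (Subsingleton.elim _ _))
  rw [eq_of_le_of_index_prime (le_commutator_of_coprime hgen hH)
    (Group.IsSolvable.commutator_lt_top_of_nontrivial G).ne (hHp ▸ hp)]
  infer_instance

theorem Subgroup.index_normalCore_dvd_factorial [Finite G] (H : Subgroup G) :
    H.normalCore.index ∣ H.index.factorial := by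
  rw [normalCore_eq_ker, index_ker, index_eq_card, ← Nat.card_perm]
  exact card_subgroup_dvd_card _

theorem Subgroup.coprime_card_map_normalCore [Finite G] {p : ℕ} (hp : p.Prime)
    {H : Subgroup G} (hHp : H.index = p) :
    (Nat.card (H.map (QuotientGroup.mk' H.normalCore))).Coprime p := by
  set H' := H.map (QuotientGroup.mk' H.normalCore)
  have hidx : H'.index = p := by
    rw [index_map_eq _ (QuotientGroup.mk'_surjective _)
      (by rw [QuotientGroup.ker_mk']; exact normalCore_le H), hHp]
  have hdvd : Nat.card H' ∣ (p - 1).factorial := by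
    refine Nat.dvd_of_mul_dvd_mul_right hp.pos ?_
    rw [mul_comm (p - 1).factorial, Nat.mul_factorial_pred hp.ne_zero, ← hidx, card_mul_index,
      ← index_eq_card, hidx, ← hHp]
    exact H.index_normalCore_dvd_factorial
  refine ((hp.coprime_iff_not_dvd).mpr fun h => ?_).symm
  have := hp.dvd_factorial.mp (h.trans hdvd)
  have := hp.pos
  omega

theorem Subgroup.normal_of_isSolvable_of_index_prime [Finite G] [Group.IsSolvable G] {p : ℕ}
    (hp : p.Prime) (hgen : closure {g : G | g ^ p = 1} = ⊤) {H : Subgroup G}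
    (hHp : H.index = p) : H.Normal := by
  set π := QuotientGroup.mk' H.normalCore
  have hπ : Function.Surjective π := QuotientGroup.mk'_surjective _
  have hker : π.ker ≤ H := by rw [QuotientGroup.ker_mk']; exact normalCore_le H
  have hgen' : closure {x : G ⧸ H.normalCore | x ^ p = 1} = ⊤ := by
    rw [eq_top_iff, ← map_top_of_surjective π hπ, ← hgen, MonoidHom.map_closure]
    exact closure_mono <| Set.image_subset_iff.mpr fun g (hg : g ^ p = 1) => by
      simp [← map_pow, hg]
  have : (H.map π).Normal := normal_of_index_prime_of_coprime hp hgen'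
    (by rw [index_map_eq _ hπ hker, hHp]) (coprime_card_map_normalCore hp hHp)
  rw [← comap_map_eq_self hker]
  exact this.comap π

theorem commutator_le_of_index_prime {M : Subgroup G} [M.Normal] (hM : M.index.Prime) :
    commutator G ≤ M := by
  have : Fact M.index.Prime := ⟨hM⟩
  have : IsCyclic (G ⧸ M) := isCyclic_of_prime_card M.index_eq_card.symm
  exact Subgroup.Normal.quotient_commutative_iff_commutator_le.mp inferInstance

theorem Group.isSolvable_of_commutator_le {H : Subgroup G} (hGH : commutator G ≤ H)
    (hH : ⁅H, H⁆ = ⊥) : Group.IsSolvable G :=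
  ⟨⟨2, le_bot_iff.mp (hH ▸ commutator_mono hGH hGH)⟩⟩

theorem Subgroup.commutator_le_of_relIndex_prime {H N : Subgroup G} [(N.subgroupOf H).Normal]
    (hN : (N.relIndex H).Prime) : ⁅H, H⁆ ≤ N :=
  commutator_le.mpr fun a ha b hb => commutator_le_of_index_prime hN <|
    commutator_mem_commutator (mem_top ⟨a, ha⟩) (mem_top ⟨b, hb⟩)

theorem Subgroup.pow_relIndex_mem_normalCore {H N : Subgroup G} [H.Normal]
    [(N.subgroupOf H).Normal] {h : G} (hh : h ∈ H) : h ^ N.relIndex H ∈ N.normalCore :=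
  fun g => by
    rw [← conj_pow]
    exact (N.subgroupOf H).pow_index_mem ⟨_, ‹H.Normal›.conj_mem h hh g⟩

theorem Subgroup.coprime_card_of_forall_pow_eq_one [Finite G] {p n : ℕ} (hp : p.Prime)
    (hpn : ¬ p ∣ n) {H : Subgroup G} (hH : ∀ h ∈ H, h ^ n = 1) : (Nat.card H).Coprime p := by
  have : Fact p.Prime := ⟨hp⟩
  refine ((hp.coprime_iff_not_dvd).mpr fun hdvd => hpn ?_).symm
  obtain ⟨h, hh⟩ := exists_prime_orderOf_dvd_card' (G := H) p hdvd
  rw [← hh, ← Subgroup.orderOf_coe]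
  exact orderOf_dvd_of_pow_eq_one (hH h h.2)

theorem Sylow.card_eq_of_card_eq_mul [Finite G] {p m : ℕ} [Fact p.Prime] (P : Sylow p G)
    (hG : Nat.card G = m * p) (hm : m.Coprime p) : Nat.card P = p := by
  have hm0 : m ≠ 0 := by rintro rfl; exact Nat.card_pos.ne' (hG.trans (zero_mul p))
  rw [P.card_eq_multiplicity, hG, Nat.factorization_mul hm0 (Fact.out : p.Prime).ne_zero,
    Finsupp.add_apply, Nat.factorization_eq_zero_of_not_dvd, Nat.Prime.factorization_self Fact.out,
    zero_add, pow_one]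
  exact ((Fact.out : p.Prime).coprime_iff_not_dvd).mp hm.symm

theorem Subgroup.isComplement'_sylow_of_coprime [Finite G] {p : ℕ} [Fact p.Prime]
    {H : Subgroup G} (hHp : H.index = p) (hH : (Nat.card H).Coprime p) (P : Sylow p G) :
    Nat.card P = p ∧ IsComplement' H P := by
  have hG : Nat.card G = Nat.card H * p := hHp ▸ (card_mul_index H).symm
  have hP := P.card_eq_of_card_eq_mul hG hH
  refine ⟨hP, isComplement'_of_coprime ?_ ?_⟩ <;> rw [hP]
  exacts [hG.symm, hH]

end

theorem stmt_11_general {G : Type*} [Group G] [Finite G] (p q : ℕ)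
    (hp : p.Prime) (hq : q.Prime) (hpq : p ≠ q)
    (H N : Subgroup G) (hHp : H.index = p)
    (hNnorm : (N.subgroupOf H).Normal)
    (hNq : N.relIndex H = q) (hNcore : N.normalCore = ⊥)
    (hgen : Subgroup.closure {g : G | orderOf g = p} = ⊤) :
    (IsSolvable G ↔ H.Normal) ∧
    (H.Normal →
      H = H.normalCore ∧
      (∀ a b : G, a ∈ H → b ∈ H → a * b = b * a) ∧
      (∀ h : G, h ∈ H → h ^ q = 1) ∧
      ∀ P : Sylow p G, Nat.card P = p ∧ H ⊓ (P : Subgroup G) = ⊥ ∧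
        ∀ g : G, ∃ h ∈ H, ∃ x ∈ (P : Subgroup G), g = h * x) := by
  have : Fact p.Prime := ⟨hp⟩
  have hgen' : closure {g : G | g ^ p = 1} = ⊤ := top_le_iff.mp <|
    hgen ▸ closure_mono fun g (hg : orderOf g = p) => hg ▸ pow_orderOf_eq_one g
  have hcomm (hH : H.Normal) : ⁅H, H⁆ = ⊥ := le_bot_iff.mp <|
    hNcore ▸ normal_le_normalCore.mpr (commutator_le_of_relIndex_prime (hNq ▸ hq))
  have hpow (hH : H.Normal) (h : G) (hh : h ∈ H) : h ^ q = 1 := by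
    simpa [hNcore, hNq] using pow_relIndex_mem_normalCore (N := N) hh
  refine ⟨⟨fun hs => ?_, fun hH => ?_⟩, fun hH => ?_⟩
  · have : Group.IsSolvable G := hs
    exact H.normal_of_isSolvable_of_index_prime hp hgen' hHp
  · exact Group.isSolvable_of_commutator_le (commutator_le_of_index_prime (hHp ▸ hp)) (hcomm hH)
  have hcop := H.coprime_card_of_forall_pow_eq_one hp
    (fun h => hpq ((Nat.prime_dvd_prime_iff_eq hp hq).mp h)) (hpow hH)
  refine ⟨H.normalCore_eq_self.symm, fun a b ha hb => ?_, hpow hH, fun P => ?_⟩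
  · exact mem_centralizer_iff.mp (commutator_eq_bot_iff_le_centralizer.mp (hcomm hH) hb) a ha
  · obtain ⟨hP, hc⟩ := H.isComplement'_sylow_of_coprime hHp hcop P
    refine ⟨hP, disjoint_iff.mp hc.disjoint, fun g => ?_⟩
    obtain ⟨⟨h, x⟩, hx⟩ := hc.2 g
    exact ⟨h, h.2, x, x.2, hx.symm⟩

/-- With the standing hypotheses on `G`, `H`, `N`, with `p` odd, and `G` generated by its
elements of order `p`: `G` is solvable iff `H` is normal in `G`. Moreover, if `H` is
normal then `H` equals its normal core, `H` is commutative with `h ^ q = 1` for all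
`h ∈ H`, and every Sylow `p`-subgroup `P` of `G` satisfies `|P| = p`, `H ⊓ P = ⊥` and
`H * P = G`. -/
theorem stmt_11 {G : Type*} [Group G] [Finite G] (p q : ℕ)
    (hp : p.Prime) (hq : q.Prime) (hpq : p ≠ q) (hodd : Odd p)
    (H N : Subgroup G) (hHp : H.index = p)
    (hNH : N ≤ H) (hNnorm : (N.subgroupOf H).Normal)
    (hNq : N.relIndex H = q) (hNcore : N.normalCore = ⊥)
    (hgen : Subgroup.closure {g : G | orderOf g = p} = ⊤) :
    (IsSolvable G ↔ H.Normal) ∧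
    (H.Normal →
      H = H.normalCore ∧
      (∀ a b : G, a ∈ H → b ∈ H → a * b = b * a) ∧
      (∀ h : G, h ∈ H → h ^ q = 1) ∧
      ∀ P : Sylow p G, Nat.card P = p ∧ H ⊓ (P : Subgroup G) = ⊥ ∧
        ∀ g : G, ∃ h ∈ H, ∃ x ∈ (P : Subgroup G), g = h * x) :=
  stmt_11_general p q hp hq hpq H N hHp hNnorm hNq hNcore hgen
end

section
/- Let G be a finite group, let p and q be distinct primes with p odd, let H be a subgroup of G of index p, and let N be a subgroup of G contained in H such that N is normal in H, N has index q in H, and the normal core of N in G is trivial. Assume moreover that G is generated by its elements of order p. Then N is the trivial subgroup if and only if the order of G equals p·q. Furthermore, if N is trivial, then p divides q − 1, H is a normal cyclic subgroup of G of order q, and G is nonabelian; that is, G is isomorphic to the nonabelian semidirect product ℤ/qℤ ⋊ ℤ/pℤ given by a faithful action of ℤ/pℤ on ℤ/qℤ. -/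
/-!
If `|G| = pq` and `G` is generated by its elements of order `p`, a Sylow `p`-subgroup cannot be
normal: it would contain every element of order `p`, hence all of `G`. So there are `q` Sylow
`p`-subgroups, whence `p ∣ q - 1` and `p < q`, and `G` is not abelian. The subgroup `H` of
index `p = minFac |G|` is then normal, complemented by a Sylow `p`-subgroup, and
`G ≅ H ⋊ P ≅ ℤ/q ⋊ ℤ/p`; the action is nontrivial because `G` is not abelian, hence faithful
because `ℤ/p` has prime order.
-/

open Subgroup

theorem Nat.minFac_mul_of_prime_of_le {p q : ℕ} (hp : p.Prime) (hq : q.Prime) (hpq : p ≤ q) :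
    (p * q).minFac = p := by
  refine le_antisymm (minFac_le_of_dvd hp.two_le (dvd_mul_right p q)) ?_
  refine (le_minFac.mpr fun r hr hrpq => ?_).resolve_left (Nat.one_lt_mul_iff.mpr ?_).ne'
  · rcases (Nat.Prime.dvd_mul hr).mp hrpq with h | h
    · exact ((prime_dvd_prime_iff_eq hr hp).mp h).ge
    · exact ((prime_dvd_prime_iff_eq hr hq).mp h) ▸ hpq
  · exact ⟨hp.pos, hq.pos, Or.inl hp.one_lt⟩

theorem Subgroup.eq_bot_iff_natCard_eq_index {G : Type*} [Group G] [Finite G] (N : Subgroup G) :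
    N = ⊥ ↔ Nat.card G = N.index := by
  rw [← card_mul_index N, ← card_eq_one]
  constructor
  · intro h
    rw [h, one_mul]
  · exact (Nat.mul_eq_right N.index_ne_zero_of_finite).mp

theorem Subgroup.card_eq_of_natCard_eq_mul_of_index_eq {G : Type*} [Group G] {H : Subgroup G}
    {m n : ℕ} (hm : 0 < m) (hG : Nat.card G = m * n) (hH : H.index = m) : Nat.card H = n := by
  have h := card_mul_index H
  rw [hH, hG, mul_comm] at h
  exact Nat.eq_of_mul_eq_mul_left hm h

theorem Subgroup.index_eq_of_natCard_eq_mul_of_card_eq {G : Type*} [Group G] {H : Subgroup G}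
    {m n : ℕ} (hm : 0 < m) (hG : Nat.card G = m * n) (hH : Nat.card H = m) : H.index = n := by
  have h := card_mul_index H
  rw [hH, hG] at h
  exact Nat.eq_of_mul_eq_mul_left hm h

theorem Sylow.closure_setOf_orderOf_eq_le {G : Type*} [Group G] {p : ℕ}
    [Subsingleton (Sylow p G)] (P : Sylow p G) : closure {g : G | orderOf g = p} ≤ P := by
  refine (closure_le _).mpr fun g hg => ?_
  obtain ⟨Q, hQ⟩ := (IsPGroup.of_card (n := 1) (by rw [Nat.card_zpowers, hg, pow_one]) :
    IsPGroup p (zpowers g)).exists_le_sylow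
  exact Subsingleton.elim Q P ▸ hQ (mem_zpowers g)

theorem SemidirectProduct.injective_of_exists_ne_mul_comm {N K : Type*} [CommGroup N]
    [CommGroup K] (hK : (Nat.card K).Prime) {φ : K →* MulAut N}
    (h : ∃ x y : N ⋊[φ] K, x * y ≠ y * x) : Function.Injective φ := by
  have := Fact.mk hK
  rcases φ.ker.eq_bot_or_eq_top_of_prime_card with hker | hker
  · exact (MonoidHom.ker_eq_bot_iff φ).mp hker
  · obtain rfl := MonoidHom.ker_eq_top_iff.mp hker
    obtain ⟨x, y, hxy⟩ := h
    exact absurd (mulEquivProd.injective (by simp only [map_mul, mul_comm])) hxy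

namespace OrderPQ

variable {G : Type*} [Group G] [Finite G] {p q : ℕ} [hp : Fact p.Prime] [hq : Fact q.Prime]

theorem card_sylow_left (hpq : p ≠ q) (hcard : Nat.card G = p * q) (P : Sylow p G) :
    Nat.card P = p := by
  have hpq' : ¬ p ∣ q := fun h => hpq ((Nat.prime_dvd_prime_iff_eq hp.out hq.out).mp h)
  rw [P.card_eq_multiplicity, hcard, Nat.factorization_mul hp.out.ne_zero hq.out.ne_zero,
    Finsupp.add_apply, hp.out.factorization_self, Nat.factorization_eq_zero_of_not_dvd hpq',
    pow_one]

theorem index_sylow_left (hpq : p ≠ q) (hcard : Nat.card G = p * q) (P : Sylow p G) :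
    (P : Subgroup G).index = q :=
  index_eq_of_natCard_eq_mul_of_card_eq hp.out.pos hcard (card_sylow_left hpq hcard P)

theorem not_subsingleton_sylow_left (hpq : p ≠ q) (hcard : Nat.card G = p * q)
    (hgen : closure {g : G | orderOf g = p} = ⊤) : ¬ Subsingleton (Sylow p G) := by
  intro _
  obtain ⟨P⟩ := (inferInstance : Nonempty (Sylow p G))
  have hP : (P : Subgroup G) = ⊤ := top_le_iff.mp (hgen ▸ P.closure_setOf_orderOf_eq_le)
  have h := index_sylow_left hpq hcard P
  rw [hP, index_top] at h
  exact hq.out.one_lt.ne h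

theorem card_sylow_left_eq (hpq : p ≠ q) (hcard : Nat.card G = p * q)
    (hgen : closure {g : G | orderOf g = p} = ⊤) : Nat.card (Sylow p G) = q := by
  obtain ⟨P⟩ := (inferInstance : Nonempty (Sylow p G))
  have hdvd : Nat.card (Sylow p G) ∣ q := index_sylow_left hpq hcard P ▸ P.card_dvd_index
  refine (hq.out.eq_one_or_self_of_dvd _ hdvd).resolve_left fun h => ?_
  exact not_subsingleton_sylow_left hpq hcard hgen (Nat.card_eq_one_iff_unique.mp h).1

theorem dvd_sub_one (hpq : p ≠ q) (hcard : Nat.card G = p * q)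
    (hgen : closure {g : G | orderOf g = p} = ⊤) : p ∣ q - 1 :=
  (Nat.modEq_iff_dvd' hq.out.one_le).mp
    (card_sylow_left_eq hpq hcard hgen ▸ card_sylow_modEq_one p G).symm

theorem normal_of_index_eq (hpq : p ≠ q) (hcard : Nat.card G = p * q)
    (hgen : closure {g : G | orderOf g = p} = ⊤) {H : Subgroup G} (hH : H.index = p) :
    H.Normal := by
  have hle : p ≤ q :=
    (Nat.le_of_dvd (Nat.sub_pos_of_lt hq.out.one_lt) (dvd_sub_one hpq hcard hgen)).trans
      (Nat.sub_le q 1)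
  rw [← Nat.minFac_mul_of_prime_of_le hp.out hq.out hle, ← hcard] at hH
  exact normal_of_index_eq_minFac_card hH

theorem exists_ne_mul_comm (hpq : p ≠ q) (hcard : Nat.card G = p * q)
    (hgen : closure {g : G | orderOf g = p} = ⊤) : ∃ a b : G, a * b ≠ b * a := by
  by_contra! hcomm
  let _ : CommGroup G := { mul_comm := hcomm }
  obtain ⟨P⟩ := (inferInstance : Nonempty (Sylow p G))
  have := P.unique_of_normal (normal_of_isMulCommutative _)
  exact not_subsingleton_sylow_left hpq hcard hgen inferInstance

theorem exists_injective_mulEquiv_semidirectProduct (hpq : p ≠ q) (hcard : Nat.card G = p * q)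
    (hgen : closure {g : G | orderOf g = p} = ⊤) {H : Subgroup G} (hH : H.index = p) :
    ∃ φ : Multiplicative (ZMod p) →* MulAut (Multiplicative (ZMod q)),
      Function.Injective φ ∧
      Nonempty (G ≃* (Multiplicative (ZMod q)) ⋊[φ] (Multiplicative (ZMod p))) := by
  have := normal_of_index_eq hpq hcard hgen hH
  obtain ⟨P⟩ := (inferInstance : Nonempty (Sylow p G))
  have hHc := card_eq_of_natCard_eq_mul_of_index_eq hp.out.pos hcard hH
  have hPc := card_sylow_left hpq hcard P
  have hcomp : H.IsComplement' P := isComplement'_of_coprime (by rw [hHc, hPc, hcard, mul_comm])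
    (by rw [hHc, hPc]; exact (Nat.coprime_primes hq.out hp.out).mpr hpq.symm)
  let eH : H ≃* Multiplicative (ZMod q) := mulEquivOfPrimeCardEq hHc (by simp)
  let eP : P ≃* Multiplicative (ZMod p) := mulEquivOfPrimeCardEq hPc (by simp)
  let e := (SemidirectProduct.mulEquivSubgroup hcomp).symm.trans (SemidirectProduct.congr' eH eP)
  refine ⟨_, SemidirectProduct.injective_of_exists_ne_mul_comm (by simpa using hp.out) ?_, ⟨e⟩⟩
  obtain ⟨a, b, hab⟩ := exists_ne_mul_comm hpq hcard hgen
  exact ⟨e a, e b, by rwa [← map_mul, ← map_mul, e.injective.ne_iff]⟩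

end OrderPQ

theorem stmt_12_general {G : Type*} [Group G] [Finite G] (p q : ℕ)
    (hp : p.Prime) (hq : q.Prime) (hpq : p ≠ q)
    (H N : Subgroup G) (hHp : H.index = p)
    (hNH : N ≤ H)
    (hNq : N.relIndex H = q)
    (hgen : Subgroup.closure {g : G | orderOf g = p} = ⊤) :
    (N = ⊥ ↔ Nat.card G = p * q) ∧
    (N = ⊥ →
      p ∣ q - 1 ∧ H.Normal ∧ IsCyclic H ∧ Nat.card H = q ∧
      ∃ φ : Multiplicative (ZMod p) →* MulAut (Multiplicative (ZMod q)),
        Function.Injective φ ∧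
        Nonempty (G ≃* (Multiplicative (ZMod q)) ⋊[φ] (Multiplicative (ZMod p)))) := by
  have := Fact.mk hp
  have := Fact.mk hq
  have hNind : N.index = p * q := by
    rw [← relIndex_mul_index hNH, hNq, hHp, mul_comm]
  have hiff : N = ⊥ ↔ Nat.card G = p * q := hNind ▸ N.eq_bot_iff_natCard_eq_index
  refine ⟨hiff, fun hN => ?_⟩
  have hcard := hiff.mp hN
  have hHc := card_eq_of_natCard_eq_mul_of_index_eq hp.pos hcard hHp
  exact ⟨OrderPQ.dvd_sub_one hpq hcard hgen, OrderPQ.normal_of_index_eq hpq hcard hgen hHp,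
    isCyclic_of_prime_card hHc, hHc,
    OrderPQ.exists_injective_mulEquiv_semidirectProduct hpq hcard hgen hHp⟩

/-- With the standing hypotheses on `G`, `H`, `N`, with `p` odd, and `G` generated by
its elements of order `p`: `N` is trivial iff `|G| = p * q`. Furthermore, if `N` is
trivial then `p ∣ q - 1`, `H` is a normal cyclic subgroup of `G` of order `q`, and
`G` is isomorphic to the nonabelian semidirect product `ℤ/qℤ ⋊ ℤ/pℤ` given by a
faithful action of `ℤ/pℤ` on `ℤ/qℤ`. -/
theorem stmt_12 {G : Type*} [Group G] [Finite G] (p q : ℕ)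
    (hp : p.Prime) (hq : q.Prime) (hpq : p ≠ q) (hodd : Odd p)
    (H N : Subgroup G) (hHp : H.index = p)
    (hNH : N ≤ H) (hNnorm : (N.subgroupOf H).Normal)
    (hNq : N.relIndex H = q) (hNcore : N.normalCore = ⊥)
    (hgen : Subgroup.closure {g : G | orderOf g = p} = ⊤) :
    (N = ⊥ ↔ Nat.card G = p * q) ∧
    (N = ⊥ →
      p ∣ q - 1 ∧ H.Normal ∧ IsCyclic H ∧ Nat.card H = q ∧
      ∃ φ : Multiplicative (ZMod p) →* MulAut (Multiplicative (ZMod q)),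
        Function.Injective φ ∧
        Nonempty (G ≃* (Multiplicative (ZMod q)) ⋊[φ] (Multiplicative (ZMod p)))) :=
  stmt_12_general p q hp hq hpq H N hHp hNH hNq hgen
end

section
/- Let p ≥ 7 be a prime and let H be a subgroup of index p in the alternating group A_p on p letters. Then H has no normal subgroup of prime index; that is, there is no subgroup N of H that is normal in H and whose index in H is a prime number. -/
/-!
The simple group `A_p` acts faithfully on the `p` cosets of `H`, and, being perfect, by even
permutations. The stabiliser `H` of the trivial coset therefore acts faithfully by even
permutations on the remaining `p - 1` cosets, and has order `p! / 2p = (p - 1)! / 2`, so this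
action identifies `H` with `A_{p-1}`, which is perfect as `p - 1 ≥ 5`. A perfect group has no
nontrivial abelian quotient, in particular none of prime order.
-/

open Equiv Equiv.Perm MulAction Group
open scoped Nat

section

variable {G α : Type*} [Group G] [MulAction G α]

theorem Group.IsPerfect.not_prime_index [IsPerfect G] (N : Subgroup G) [N.Normal] :
    ¬ N.index.Prime := by
  intro hN
  have : Fact (Nat.card (G ⧸ N)).Prime := ⟨hN⟩
  have := isCyclic_of_prime_card (α := G ⧸ N) rfl
  have : Subsingleton (G ⧸ N) := IsPerfect.subsingleton_of_isMulCommutative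
  exact hN.ne_one (Subgroup.index_eq_one.mpr (by simpa using this))

theorem Group.IsPerfect.sign_toPerm_eq_one [IsPerfect G] [Fintype α] [DecidableEq α] (g : G) :
    sign (toPerm g : Perm α) = 1 :=
  Abelianization.commutator_subset_ker (sign.comp (toPermHom G α)) IsPerfect.mem_commutator

/-- By counting, the action identifies `G` with `alternatingGroup α`. -/
theorem isPerfect_of_two_mul_card_eq_factorial [Fintype α] [DecidableEq α] [FaithfulSMul G α]
    (hα : 5 ≤ Nat.card α) (hsign : ∀ g : G, sign (toPerm g : Perm α) = 1)
    (hcard : 2 * Nat.card G = (Nat.card α)!) : IsPerfect G := by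
  have : Nontrivial α := Finite.one_lt_card_iff_nontrivial.mp (by omega)
  have := isPerfect_def.mpr (commutator_alternatingGroup_eq_top hα)
  let f : G →* alternatingGroup α := (toPermHom G α).codRestrict _ hsign
  have hf : Function.Bijective f := by
    refine (Nat.bijective_iff_injective_and_card f).mpr
      ⟨fun g h hgh => toPerm_injective (congrArg Subtype.val hgh), ?_⟩
    have := two_mul_nat_card_alternatingGroup (α := α)
    rw [Nat.card_perm] at this
    omega
  exact IsPerfect.ofSurjective (f := (MulEquiv.ofBijective f hf).symm.toMonoidHom)
    (MulEquiv.ofBijective f hf).symm.surjective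

instance SubMulAction.faithfulSMul_ofStabilizer [FaithfulSMul G α] (a : α) :
    FaithfulSMul (stabilizer G a) (SubMulAction.ofStabilizer G a) where
  eq_of_smul_eq_smul {s t} h := by
    refine Subtype.ext (eq_of_smul_eq_smul (α := α) fun x => ?_)
    by_cases hx : x = a
    · rw [hx, mem_stabilizer_iff.mp s.prop, mem_stabilizer_iff.mp t.prop]
    · exact congrArg Subtype.val (h ⟨x, hx⟩)

theorem isPerfect_stabilizer_of_two_mul_card_eq_factorial [Fintype α] [DecidableEq α]
    [FaithfulSMul G α] (hα : 6 ≤ Nat.card α) (hsign : ∀ g : G, sign (toPerm g : Perm α) = 1)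
    (a : α) (hcard : 2 * Nat.card (stabilizer G a) = (Nat.card α - 1)!) :
    IsPerfect (stabilizer G a) := by
  classical
  have hcompl := SubMulAction.nat_card_ofStabilizer_add_one_eq G a
  refine isPerfect_of_two_mul_card_eq_factorial (α := SubMulAction.ofStabilizer G a) (by omega)
    (fun s => ?_) (by rwa [← hcompl, Nat.add_sub_cancel] at hcard)
  rw [← hsign s]
  have hfix : (s : G) • a = a := s.prop
  convert sign_subtypePerm (toPerm (s : G) : Perm α) (p := (· ∈ SubMulAction.ofStabilizer G a))
    (fun x => (SubMulAction.ofStabilizer G a).smul_mem_iff' s)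
    (fun x hx hxa => hx (by rw [show x = a from hxa]; exact hfix)) using 2
  exact Equiv.ext fun _ => rfl

end

theorem Subgroup.faithfulSMul_quotient_of_ne_top {G : Type*} [Group G] [IsSimpleGroup G]
    {H : Subgroup G} (hH : H ≠ ⊤) : FaithfulSMul G (G ⧸ H) where
  eq_of_smul_eq_smul {g h} hgh := by
    have hker : (toPermHom G (G ⧸ H)).ker = ⊥ := by
      rw [← normalCore_eq_ker]
      exact H.normalCore_normal.eq_bot_or_eq_top.resolve_right
        fun h => hH (top_le_iff.mp (h ▸ H.normalCore_le))
    exact (MonoidHom.ker_eq_bot_iff _).mp hker (Equiv.ext hgh)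

namespace alternatingGroup

variable {α : Type*} [Fintype α] [DecidableEq α]

theorem two_mul_card_of_index_eq_card [Nontrivial α] {H : Subgroup (alternatingGroup α)}
    (hH : H.index = Nat.card α) : 2 * Nat.card H = (Nat.card α - 1)! := by
  have hG := two_mul_nat_card_alternatingGroup (α := α)
  rw [Nat.card_perm, ← H.card_mul_index, hH, ← Nat.mul_factorial_pred Nat.card_pos.ne'] at hG
  exact Nat.eq_of_mul_eq_mul_left (Nat.card_pos (α := α)) (by rw [← hG]; ring)

theorem isPerfect_of_index_eq_card (hα : 6 ≤ Nat.card α) {H : Subgroup (alternatingGroup α)}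
    (hH : H.index = Nat.card α) : IsPerfect H := by
  classical
  have : Nontrivial α := Finite.one_lt_card_iff_nontrivial.mp (by omega)
  have := isSimpleGroup (α := α) (by omega)
  have := isPerfect_def.mpr (commutator_alternatingGroup_eq_top (α := α) (by omega))
  have := Subgroup.faithfulSMul_quotient_of_ne_top (H := H) fun hHtop => by
    rw [hHtop, Subgroup.index_top] at hH; omega
  have hperf := isPerfect_stabilizer_of_two_mul_card_eq_factorial (by rwa [← Subgroup.index, hH])
    IsPerfect.sign_toPerm_eq_one ((1 : alternatingGroup α) : alternatingGroup α ⧸ H)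
    (by rw [stabilizer_quotient, ← Subgroup.index, hH]; exact two_mul_card_of_index_eq_card hH)
  rwa [stabilizer_quotient] at hperf

end alternatingGroup

theorem stmt_15_general (p : ℕ) (hp7 : 7 ≤ p)
    (H : Subgroup (alternatingGroup (Fin p))) (hH : H.index = p) :
    ¬ ∃ N : Subgroup H, N.Normal ∧ N.index.Prime := by
  rintro ⟨N, hN, hNp⟩
  have := alternatingGroup.isPerfect_of_index_eq_card (H := H) (by rw [Nat.card_fin]; omega)
    (by rwa [Nat.card_fin])
  exact IsPerfect.not_prime_index N hNp

/-- Let `p ≥ 7` be a prime and `H` a subgroup of index `p` in the alternating group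
`A_p`. Then `H` has no normal subgroup of prime index. -/
theorem stmt_15 (p : ℕ) (hp : p.Prime) (hp7 : 7 ≤ p)
    (H : Subgroup (alternatingGroup (Fin p))) (hH : H.index = p) :
    ¬ ∃ N : Subgroup H, N.Normal ∧ N.index.Prime :=
  stmt_15_general p hp7 H hH
end

section
/- Let n ≥ 4 and let F₂ be the field with two elements. Let H be the stabilizer in the general linear group GL(n, F₂) of a fixed nonzero vector v of F₂^n (i.e., H = {A ∈ GL(n, F₂) : A·v = v}). Then H is perfect: H equals its own commutator subgroup. -/
/-!
Write `transvec w φ` for the transvection `x ↦ x + (φ ⬝ᵥ x) • w` (where `φ ⬝ᵥ w = 0`); it fixes `v`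
when `φ ⬝ᵥ v = 0`.

Every such transvection is a commutator inside the stabilizer of `v`: since `n ≥ 4`, the hyperplane
`ker φ` is not contained in `span {w, v}`, so there are `u ∈ ker φ` and `ψ` with `ψ ⬝ᵥ u = 1`,
`ψ ⬝ᵥ w = ψ ⬝ᵥ v = 0`, and then `⁅transvec w ψ, transvec u φ⁆ = transvec w φ`.

Conversely these transvections generate the stabilizer of `v`. After conjugating, `v = eᵢ`.
Right-multiplying `A` (whose `i`-th column is `eᵢ`) by a transvection fixing `eᵢ` clears row `i`,
leaving the block matrix `diag(B, 1)`; `B` is a product of elementary transvections, because over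
`𝔽₂` the only invertible diagonal matrix is `1`.
-/

open Matrix MulAction
open scoped commutatorElement

lemma ZMod.eq_one_of_ne_zero_mod_two {x : ZMod 2} (hx : x ≠ 0) : x = 1 := by
  revert x; decide

namespace Matrix.GeneralLinearGroup

section CommRing

variable {ι R : Type*} [Fintype ι] [DecidableEq ι] [CommRing R]

def transvec (w φ : ι → R) (h : φ ⬝ᵥ w = 0) : GL ι R where
  val := 1 + vecMulVec w φ
  inv := 1 - vecMulVec w φ
  val_inv := by
    rw [mul_sub, mul_one, add_mul, one_mul, vecMulVec_mul_vecMulVec, h, zero_smul, vecMulVec_zero]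
    abel
  inv_val := by
    rw [sub_mul, one_mul, mul_add, mul_one, vecMulVec_mul_vecMulVec, h, zero_smul, vecMulVec_zero]
    abel

@[simp] lemma coe_transvec (w φ : ι → R) (h : φ ⬝ᵥ w = 0) :
    (transvec w φ h : Matrix ι ι R) = 1 + vecMulVec w φ := rfl

lemma transvec_inv (w φ : ι → R) (h : φ ⬝ᵥ w = 0) :
    (transvec w φ h)⁻¹ = transvec (-w) φ (by rw [dotProduct_neg, h, neg_zero]) :=
  Units.ext <| show 1 - vecMulVec w φ = 1 + vecMulVec (-w) φ by
    rw [neg_vecMulVec, sub_eq_add_neg]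

lemma transvec_zero_right (w : ι → R) : transvec w 0 (zero_dotProduct w) = 1 :=
  Units.ext <| by simp

lemma transvec_smul (w φ : ι → R) (h : φ ⬝ᵥ w = 0) (x : ι → R) :
    transvec w φ h • x = x + (φ ⬝ᵥ x) • w := by
  rw [Units.smul_def, coe_transvec, smul_eq_mulVec, add_mulVec, one_mulVec, vecMulVec_mulVec,
    op_smul_eq_smul]

lemma transvec_mem_stabilizer {v w φ : ι → R} (h : φ ⬝ᵥ w = 0) (hv : φ ⬝ᵥ v = 0) :
    transvec w φ h ∈ stabilizer (GL ι R) v := by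
  rw [mem_stabilizer_iff, transvec_smul, hv, zero_smul, add_zero]

lemma commutatorElement_transvec {u w φ ψ : ι → R} (hψu : ψ ⬝ᵥ u = 1) (hψw : ψ ⬝ᵥ w = 0)
    (hφu : φ ⬝ᵥ u = 0) (hφw : φ ⬝ᵥ w = 0) :
    ⁅transvec w ψ hψw, transvec u φ hφu⁆ = transvec w φ hφw := by
  apply Units.ext
  -- with `a = w ψᵀ` and `b = u φᵀ`: `a² = b² = b a = 0` and `a b = w φᵀ`
  simp only [commutatorElement_def, transvec_inv, Units.val_mul, coe_transvec, add_mul, mul_add,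
    one_mul, mul_one, vecMulVec_mul_vecMulVec, neg_vecMulVec, Matrix.neg_mul, Matrix.mul_neg,
    hψu, hψw, hφu, hφw, zero_smul, one_smul, neg_zero, vecMulVec_zero, Matrix.zero_mul]
  abel

end CommRing

section Field

variable {ι K : Type*} [Fintype ι] [DecidableEq ι] [Field K]

lemma exists_dotProduct_eq_zero_notMem_span (hι : 4 ≤ Fintype.card ι) {φ : ι → K} (hφ : φ ≠ 0)
    (w v : ι → K) : ∃ u, φ ⬝ᵥ u = 0 ∧ u ∉ Submodule.span K {w, v} := by
  classical
  have hf : dotProductEquiv K ι φ ≠ 0 := by simpa using hφ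
  have hker := Module.Dual.finrank_ker_add_one_of_ne_zero hf
  have hspan : Module.finrank K (Submodule.span K {w, v}) ≤ 2 :=
    (finrank_span_le_card _).trans (by simpa using Finset.card_le_two)
  by_contra! hsub
  have hle : LinearMap.ker (dotProductEquiv K ι φ) ≤ Submodule.span K {w, v} :=
    fun x hx => hsub x (by simpa using hx)
  have := Submodule.finrank_mono hle
  rw [Module.finrank_fintype_fun_eq_card] at hker
  omega

lemma exists_dotProduct_eq_one_of_notMem {p : Submodule K (ι → K)} {u : ι → K} (hu : u ∉ p) :
    ∃ ψ : ι → K, ψ ⬝ᵥ u = 1 ∧ ∀ x ∈ p, ψ ⬝ᵥ x = 0 := by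
  obtain ⟨f, hfu, hfp⟩ := Submodule.exists_dual_map_eq_bot_of_notMem hu inferInstance
  have hdot (x : ι → K) : (dotProductEquiv K ι).symm f ⬝ᵥ x = f x :=
    LinearMap.congr_fun ((dotProductEquiv K ι).apply_symm_apply f) x
  refine ⟨(f u)⁻¹ • (dotProductEquiv K ι).symm f, ?_, fun x hx => ?_⟩
  · rw [smul_dotProduct, hdot, smul_eq_mul, inv_mul_cancel₀ hfu]
  · have hfx : f x ∈ p.map f := Submodule.mem_map_of_mem hx
    rw [hfp, Submodule.mem_bot] at hfx
    rw [smul_dotProduct, hdot, hfx, smul_zero]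

theorem transvec_mem_commutator_stabilizer (hι : 4 ≤ Fintype.card ι) {v w φ : ι → K}
    (h : φ ⬝ᵥ w = 0) (hv : φ ⬝ᵥ v = 0) :
    transvec w φ h ∈ ⁅stabilizer (GL ι K) v, stabilizer (GL ι K) v⁆ := by
  rcases eq_or_ne φ 0 with rfl | hφ
  · rw [transvec_zero_right]
    exact one_mem _
  obtain ⟨u, hφu, hu⟩ := exists_dotProduct_eq_zero_notMem_span hι hφ w v
  obtain ⟨ψ, hψu, hψ⟩ := exists_dotProduct_eq_one_of_notMem hu
  have hψw := hψ w (Submodule.subset_span (by simp))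
  have hψv := hψ v (Submodule.subset_span (by simp))
  rw [← commutatorElement_transvec hψu hψw hφu h]
  exact Subgroup.commutator_mem_commutator (transvec_mem_stabilizer hψw hψv)
    (transvec_mem_stabilizer hφu hv)

end Field

section Block

variable {ι R : Type*} [DecidableEq ι] [CommRing R] (i : ι)

def extendAt (B : Matrix {j // j ≠ i} {j // j ≠ i} R) : Matrix ι ι R :=
  reindex (Equiv.sumCompl (· ≠ i)) (Equiv.sumCompl (· ≠ i)) (fromBlocks B 0 0 1)

lemma extendAt_one : extendAt i (1 : Matrix {j // j ≠ i} {j // j ≠ i} R) = 1 := by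
  simp [extendAt]

variable [Fintype ι]

lemma extendAt_mul (B C : Matrix {j // j ≠ i} {j // j ≠ i} R) :
    extendAt i (B * C) = extendAt i B * extendAt i C := by
  simp [extendAt, fromBlocks_multiply]

lemma det_extendAt (B : Matrix {j // j ≠ i} {j // j ≠ i} R) : (extendAt i B).det = B.det := by
  simp [extendAt]

lemma extendAt_transvection (t : TransvectionStruct {j // j ≠ i} R) :
    extendAt i t.toMatrix = transvection (t.i : ι) t.j t.c := by
  rw [extendAt, ← TransvectionStruct.toMatrix_sumInl, ← coe_reindexAlgEquiv R,
    ← TransvectionStruct.toMatrix_reindexEquiv]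
  rfl

lemma transvection_eq_coe_transvec {a b : ι} (hab : a ≠ b) (c : R) :
    transvection a b c = transvec (Pi.single a c) (Pi.single b 1) (by simp [hab.symm]) := by
  ext j k
  simp only [transvection, single_apply, coe_transvec, add_apply, vecMulVec_apply, Pi.single_apply]
  grind

variable {i} in
lemma mul_transvec_eq_extendAt {A : GL ι R} (hA : A ∈ stabilizer (GL ι R) (Pi.single i 1 : ι → R)) :
    (A : Matrix ι ι R) * (1 + vecMulVec (Pi.single i 1) (Pi.single i 1 - (A : Matrix ι ι R) i)) =
      extendAt i ((A : Matrix ι ι R).submatrix (↑) (↑)) := by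
  rw [mem_stabilizer_iff, Units.smul_def, smul_eq_mulVec] at hA
  have hcol (j : ι) : (A : Matrix ι ι R) j i = (Pi.single i 1 : ι → R) j := by
    simpa using congrFun hA j
  rw [mul_add, mul_one, mul_vecMulVec, hA]
  ext j k
  by_cases hj : j = i <;> by_cases hk : k = i <;> simp [extendAt, vecMulVec_apply, *]

end Block

section ZModTwo

variable {ι : Type*} [Fintype ι] [DecidableEq ι]

lemma diagonal_eq_one_of_det_ne_zero {D : ι → ZMod 2} (hD : (diagonal D).det ≠ 0) :
    diagonal D = 1 := by
  rw [det_diagonal, Finset.prod_ne_zero_iff] at hD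
  rw [← diagonal_one]
  exact congrArg diagonal <| funext fun j =>
    ZMod.eq_one_of_ne_zero_mod_two (hD j (Finset.mem_univ j))

variable {i : ι} {G : Subgroup (GL ι (ZMod 2))}

lemma exists_mem_coe_eq_extendAt
    (hG : ∀ w φ (h : φ ⬝ᵥ w = 0), φ ⬝ᵥ Pi.single i 1 = 0 → transvec w φ h ∈ G)
    {B : Matrix {j // j ≠ i} {j // j ≠ i} (ZMod 2)} (hB : B.det ≠ 0) :
    ∃ g ∈ G, (g : Matrix ι ι (ZMod 2)) = extendAt i B := by
  refine diagonal_transvection_induction_of_det_ne_zero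
    (fun M => ∃ g ∈ G, (g : Matrix ι ι (ZMod 2)) = extendAt i M) B hB ?_ ?_ ?_
  · intro D hD
    exact ⟨1, one_mem G, by rw [diagonal_eq_one_of_det_ne_zero hD, extendAt_one, Units.val_one]⟩
  · intro t
    have hij : (t.i : ι) ≠ t.j := Subtype.coe_injective.ne t.hij
    refine ⟨transvec (Pi.single (t.i : ι) t.c) (Pi.single (t.j : ι) 1) (by simp [hij.symm]),
      hG _ _ _ (by simp [t.j.2]), ?_⟩
    rw [extendAt_transvection, transvection_eq_coe_transvec hij]
  · rintro A B - - ⟨g, hg, hgA⟩ ⟨g', hg', hgB⟩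
    exact ⟨g * g', mul_mem hg hg', by rw [Units.val_mul, hgA, hgB, extendAt_mul]⟩

theorem stabilizer_single_le_of_transvec_mem
    (hG : ∀ w φ (h : φ ⬝ᵥ w = 0), φ ⬝ᵥ Pi.single i 1 = 0 → transvec w φ h ∈ G) :
    stabilizer (GL ι (ZMod 2)) (Pi.single i 1 : ι → ZMod 2) ≤ G := by
  intro A hA
  have hφ : ((Pi.single i 1 : ι → ZMod 2) - (A : Matrix ι ι (ZMod 2)) i) ⬝ᵥ Pi.single i 1 = 0 := by
    have hAii : (A : Matrix ι ι (ZMod 2)) i i = 1 := by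
      simpa [Units.smul_def] using congrFun (mem_stabilizer_iff.mp hA) i
    simp [hAii]
  have hAT := mul_transvec_eq_extendAt hA
  have hB : ((A : Matrix ι ι (ZMod 2)).submatrix (↑) (↑) : Matrix {j // j ≠ i} _ _).det ≠ 0 := by
    rw [← det_extendAt i, ← hAT]
    exact (isUnits_det_units (A * transvec _ _ hφ)).ne_zero
  obtain ⟨g, hg, hgA⟩ := exists_mem_coe_eq_extendAt hG hB
  have hAg : A = g * (transvec _ _ hφ)⁻¹ := by
    rw [eq_mul_inv_iff_mul_eq]
    exact Units.ext (hAT.trans hgA.symm)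
  rw [hAg]
  exact mul_mem hg (inv_mem (hG _ _ hφ hφ))

theorem isPerfect_stabilizer_single (hι : 4 ≤ Fintype.card ι) (i : ι) :
    Group.IsPerfect (stabilizer (GL ι (ZMod 2)) (Pi.single i 1 : ι → ZMod 2)) := by
  rw [Subgroup.isPerfect_iff]
  exact le_antisymm (Subgroup.commutator_le_self _)
    (stabilizer_single_le_of_transvec_mem fun _ _ h hφ =>
      transvec_mem_commutator_stabilizer hι h hφ)

theorem exists_smul_single_eq {v : ι → ZMod 2} (hv : v ≠ 0) :
    ∃ (g : GL ι (ZMod 2)) (i : ι), g • (Pi.single i 1 : ι → ZMod 2) = v := by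
  obtain ⟨i, hi⟩ := Function.ne_iff.mp hv
  have hvi : v i = 1 := ZMod.eq_one_of_ne_zero_mod_two hi
  refine ⟨transvec (v - Pi.single i 1) (Pi.single i 1) (by simp [hvi]), i, ?_⟩
  rw [transvec_smul]
  simp

end ZModTwo

end Matrix.GeneralLinearGroup

/-- Let `n ≥ 4` and let `H ≤ GL(n, F₂)` be the stabilizer of a fixed nonzero vector `v`
of `F₂ ^ n`. Then `H` is perfect: `H` equals its own commutator subgroup. -/
theorem stmt_18 (n : ℕ) (hn : 4 ≤ n)
    (v : Fin n → ZMod 2) (hv : v ≠ 0)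
    (H : Subgroup (Matrix.GeneralLinearGroup (Fin n) (ZMod 2)))
    (hH : ∀ A : Matrix.GeneralLinearGroup (Fin n) (ZMod 2),
      A ∈ H ↔ (A : Matrix (Fin n) (Fin n) (ZMod 2)).mulVec v = v) :
    commutator H = ⊤ := by
  obtain rfl : H = stabilizer _ v := Subgroup.ext hH
  obtain ⟨g, i, rfl⟩ := Matrix.GeneralLinearGroup.exists_smul_single_eq hv
  have := Matrix.GeneralLinearGroup.isPerfect_stabilizer_single (by simpa using hn) i
  rw [← Group.isPerfect_def, stabilizer_smul_eq_stabilizer_map_conj]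
  exact Group.IsPerfect.map _
end
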